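/- arXiv:1206.2790 — 2 statements merged into one kernel-verified Lean document; each statement's English description precedes it below -/
import Mathlib

section
/- (Necessary condition for a local minimum of the Fréchet function.) Let X₁, …, X_m : Fin J → E be configurations and F(Z) = (1/m) ∑_{j=1}^m D(Z, Xⱼ)². Suppose W : Fin J → E is a local minimum of F, i.e. there exists r > 0 such that F(Z) ≥ F(W) for every Z : Fin J → E with ‖Z i − W i‖ < r for all i. Then: (a) for every choice of optimal pairings σⱼ between W and Xⱼ, W i = (1/m) • ∑_{j=1}^m Xⱼ (σⱼ i) for every i (each point of W is the arithmetic mean of its paired points); and (b) the optimal pairing to each Xⱼ is unique in the sense that if σⱼ and σ'ⱼ are both optimal pairings between W and Xⱼ, then Xⱼ (σⱼ i) = Xⱼ (σ'ⱼ i) for all i. -/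
/-!
At a local minimum `W` of the Fréchet function, fix optimal pairings `σⱼ`. The function
`Z ↦ ∑ⱼ ∑ᵢ ‖Z i - Xⱼ (σⱼ i)‖²` dominates `∑ⱼ D(Z, Xⱼ)²` and agrees with it at `W`, so it also has
a local minimum at `W`. It is separable in the points `Z i`, so each `W i` is a local minimum of
`z ↦ ∑ⱼ ‖z - Xⱼ (σⱼ i)‖²`, whose vanishing gradient makes `W i` the mean of its paired points.
Uniqueness follows by changing a single pairing `σⱼ` to another optimal one: both families give
the same mean, so the two points paired with `W i` in `Xⱼ` coincide.
-/

/-- The squared L²-matching distance between two configurations of `J` points. -/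
noncomputable def sqD {E : Type*} [NormedAddCommGroup E] [InnerProductSpace ℝ E] {J : ℕ}
    (X Y : Fin J → E) : ℝ :=
  ⨅ σ : Equiv.Perm (Fin J), ∑ i, ‖X i - Y (σ i)‖ ^ 2

theorem IsLocalMin.of_sum_apply {ι β : Type*} [Fintype ι] [DecidableEq ι] {X : ι → Type*}
    [∀ i, TopologicalSpace (X i)] [AddCommMonoid β] [PartialOrder β] [IsOrderedCancelAddMonoid β]
    {g : ∀ i, X i → β} {w : ∀ i, X i} (h : IsLocalMin (fun z => ∑ i, g i (z i)) w) (i : ι) :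
    IsLocalMin (g i) (w i) := by
  have hupdate : IsLocalMin (fun z => ∑ k, g k (Function.update w i z k)) (w i) :=
    (Function.update_eq_self i w ▸ h).comp_continuous
      (continuous_const.update i continuous_id).continuousAt
  refine hupdate.mono fun z hz => ?_
  simp only [Function.apply_update (fun k => g k), Fintype.sum_eq_add_sum_compl i,
    Function.update_self,
    Finset.sum_update_of_notMem (Finset.notMem_compl.2 (Finset.mem_singleton_self i))] at hz
  exact le_of_add_le_add_right hz

section

variable {E : Type*} [NormedAddCommGroup E] [InnerProductSpace ℝ E]

theorem card_smul_eq_sum_of_isLocalMin {ι : Type*} [Fintype ι] {a : ι → E} {w : E}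
    (h : IsLocalMin (fun z => ∑ j, ‖z - a j‖ ^ 2) w) :
    (Fintype.card ι : ℝ) • w = ∑ j, a j := by
  have hderiv : HasFDerivAt (fun z => ∑ j, ‖z - a j‖ ^ 2) (∑ j, 2 • innerSL ℝ (w - a j)) w :=
    HasFDerivAt.fun_sum fun j _ => by
      simpa only [id, ContinuousLinearMap.comp_id] using
        ((hasFDerivAt_id w).sub_const (a j)).norm_sq
  have hsum : ∑ j, (w - a j) = (Fintype.card ι : ℝ) • w - ∑ j, a j := by
    simp [Finset.sum_sub_distrib, Nat.cast_smul_eq_nsmul]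
  -- evaluate the vanishing derivative at `∑ j, (w - a j)` itself
  have hzero := congr($(h.hasFDerivAt_eq_zero hderiv) ((Fintype.card ι : ℝ) • w - ∑ j, a j))
  simp only [sum_apply, smul_apply, innerSL_apply_apply, ← Finset.smul_sum, ← sum_inner, hsum,
    zero_apply, real_inner_self_eq_norm_sq] at hzero
  exact sub_eq_zero.1 (by simpa using hzero)

variable {J : ℕ}

def IsOptimalPairing (X Y : Fin J → E) (σ : Equiv.Perm (Fin J)) : Prop :=
  ∑ i, ‖X i - Y (σ i)‖ ^ 2 = sqD X Y

theorem sqD_le_sum (X Y : Fin J → E) (σ : Equiv.Perm (Fin J)) :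
    sqD X Y ≤ ∑ i, ‖X i - Y (σ i)‖ ^ 2 :=
  ciInf_le (Set.finite_range _).bddBelow σ

theorem exists_isOptimalPairing (X Y : Fin J → E) : ∃ σ, IsOptimalPairing X Y σ := by
  obtain ⟨σ, hσ⟩ := Finite.exists_min fun σ : Equiv.Perm (Fin J) => ∑ i, ‖X i - Y (σ i)‖ ^ 2
  exact ⟨σ, le_antisymm (le_ciInf hσ) (sqD_le_sum X Y σ)⟩

variable {ι : Type*} [Fintype ι] {X : ι → Fin J → E} {W : Fin J → E}

theorem isLocalMin_sum_sum_of_isOptimalPairing (h : IsLocalMin (fun Z => ∑ j, sqD Z (X j)) W)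
    {σ : ι → Equiv.Perm (Fin J)} (hσ : ∀ j, IsOptimalPairing W (X j) (σ j)) :
    IsLocalMin (fun Z => ∑ i, ∑ j, ‖Z i - X j (σ j i)‖ ^ 2) W :=
  h.mono fun Z hZ => calc
    ∑ i, ∑ j, ‖W i - X j (σ j i)‖ ^ 2 = ∑ j, sqD W (X j) := by
      rw [Finset.sum_comm]; exact Finset.sum_congr rfl fun j _ => hσ j
    _ ≤ ∑ j, sqD Z (X j) := hZ
    _ ≤ ∑ j, ∑ i, ‖Z i - X j (σ j i)‖ ^ 2 := Finset.sum_le_sum fun j _ => sqD_le_sum _ _ _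
    _ = ∑ i, ∑ j, ‖Z i - X j (σ j i)‖ ^ 2 := Finset.sum_comm

theorem card_smul_eq_sum_of_isOptimalPairing (h : IsLocalMin (fun Z => ∑ j, sqD Z (X j)) W)
    {σ : ι → Equiv.Perm (Fin J)} (hσ : ∀ j, IsOptimalPairing W (X j) (σ j)) (i : Fin J) :
    (Fintype.card ι : ℝ) • W i = ∑ j, X j (σ j i) :=
  card_smul_eq_sum_of_isLocalMin <| (isLocalMin_sum_sum_of_isOptimalPairing h hσ).of_sum_apply
    (g := fun i z => ∑ j, ‖z - X j (σ j i)‖ ^ 2) i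

theorem apply_eq_of_isOptimalPairing (h : IsLocalMin (fun Z => ∑ j, sqD Z (X j)) W) (j : ι)
    {σ σ' : Equiv.Perm (Fin J)} (hσ : IsOptimalPairing W (X j) σ)
    (hσ' : IsOptimalPairing W (X j) σ') (i : Fin J) : X j (σ i) = X j (σ' i) := by
  classical
  choose τ hτ using fun k => exists_isOptimalPairing W (X k)
  have hmean : ∀ ρ, IsOptimalPairing W (X j) ρ →
      (Fintype.card ι : ℝ) • W i = X j (ρ i) + ∑ k ∈ {j}ᶜ, X k (τ k i) := by
    intro ρ hρ
    have hopt : ∀ k, IsOptimalPairing W (X k) (Function.update τ j ρ k) := by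
      intro k
      rcases eq_or_ne k j with rfl | hk
      · simpa using hρ
      · simpa [Function.update_of_ne hk] using hτ k
    rw [card_smul_eq_sum_of_isOptimalPairing h hopt i, Fintype.sum_eq_add_sum_compl j,
      Function.update_self]
    congr 1
    exact Finset.sum_congr rfl fun k hk => by rw [Function.update_of_ne (by simpa using hk)]
  exact add_right_cancel ((hmean σ hσ).symm.trans (hmean σ' hσ'))

end

/-- Necessary condition for a local minimum of the Fréchet function
`F(Z) = (1/m) ∑ⱼ D(Z, Xⱼ)²`: (a) each point of `W` is the arithmetic mean of its
optimally paired points, and (b) the optimal pairing to each `Xⱼ` is unique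
(in the sense that any two optimal pairings match the same points). -/
theorem local_min_frechet_necessary
    {E : Type*} [NormedAddCommGroup E] [InnerProductSpace ℝ E] (m J : ℕ) (hm : 1 ≤ m)
    (X : Fin m → Fin J → E) (W : Fin J → E)
    (hloc : ∃ r > (0 : ℝ), ∀ Z : Fin J → E, (∀ i, ‖Z i - W i‖ < r) →
      (1 / m : ℝ) * ∑ j, sqD W (X j) ≤ (1 / m : ℝ) * ∑ j, sqD Z (X j)) :
    (∀ σ : Fin m → Equiv.Perm (Fin J),
      (∀ j, ∑ i, ‖W i - X j (σ j i)‖ ^ 2 = sqD W (X j)) →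
      ∀ i, W i = (1 / m : ℝ) • ∑ j, X j (σ j i)) ∧
    (∀ j, ∀ σ σ' : Equiv.Perm (Fin J),
      ∑ i, ‖W i - X j (σ i)‖ ^ 2 = sqD W (X j) →
      ∑ i, ‖W i - X j (σ' i)‖ ^ 2 = sqD W (X j) →
      ∀ i, X j (σ i) = X j (σ' i)) := by
  obtain ⟨r, hr, hmin⟩ := hloc
  have hm₀ : (0 : ℝ) < m := by exact_mod_cast hm
  -- the sup norm on `Fin J → E` turns the hypothesis into a local minimum
  have h : IsLocalMin (fun Z => ∑ j, sqD Z (X j)) W :=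
    Filter.mem_of_superset (Metric.ball_mem_nhds W hr) fun Z hZ =>
      le_of_mul_le_mul_left
        (hmin Z fun i => by simpa [dist_eq_norm] using (dist_pi_lt_iff hr).1 hZ i) (by positivity)
  refine ⟨fun σ hσ i => ?_, fun j σ σ' hσ hσ' => apply_eq_of_isOptimalPairing h j hσ hσ'⟩
  rw [← card_smul_eq_sum_of_isOptimalPairing h hσ i, Fintype.card_fin, smul_smul,
    one_div_mul_cancel hm₀.ne', one_smul]
end

section
/- (Sufficient condition for a local minimum of the Fréchet function.) Let X₁, …, X_m : Fin J → E be configurations and F(Z) = (1/m) ∑_{j=1}^m D(Z, Xⱼ)². Suppose W : Fin J → E is such that for each j there is a permutation σⱼ which is the strictly unique optimal pairing between W and Xⱼ (for every σ ≠ σⱼ, ∑ i, ‖W i − Xⱼ (σⱼ i)‖² < ∑ i, ‖W i − Xⱼ (σ i)‖²), and W i = (1/m) • ∑_{j=1}^m Xⱼ (σⱼ i) for every i. Then W is a local minimum of F: there exists r > 0 such that F(Z) ≥ F(W) for every Z : Fin J → E with ‖Z i − W i‖ < r for all i. -/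
open Finset


local notation "⟪" x ", " y "⟫" => @inner ℝ _ _ x y

lemma cost_expand' {E : Type*} [NormedAddCommGroup E] [InnerProductSpace ℝ E] {J : ℕ}
    (Z W x : Fin J → E) :
    ∑ i, ‖Z i - x i‖ ^ 2
      = ∑ i, ‖W i - x i‖ ^ 2 + ∑ i, ‖Z i - W i‖ ^ 2
        + 2 * ∑ i, ⟪Z i - W i, W i - x i⟫ := by
  have h : ∀ i, ‖Z i - x i‖ ^ 2
      = ‖W i - x i‖ ^ 2 + ‖Z i - W i‖ ^ 2 + 2 * ⟪Z i - W i, W i - x i⟫ := by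
    intro i
    have : Z i - x i = (Z i - W i) + (W i - x i) := by abel
    rw [this, norm_add_sq_real]
    ring
  rw [Finset.mul_sum, ← Finset.sum_add_distrib, ← Finset.sum_add_distrib]
  exact Finset.sum_congr rfl fun i _ => h i

/-- Sufficient condition for a local minimum of the Fréchet function
`F(Z) = (1/m) ∑ⱼ D(Z, Xⱼ)²`: if for each `j` there is a strictly unique optimal
pairing `σⱼ` between `W` and `Xⱼ` and each point of `W` is the arithmetic mean of
its paired points, then `W` is a local minimum of `F`. -/
theorem local_min_frechet_sufficient
    {E : Type*} [NormedAddCommGroup E] [InnerProductSpace ℝ E] (m J : ℕ) (hm : 1 ≤ m)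
    (X : Fin m → Fin J → E) (W : Fin J → E) (σ : Fin m → Equiv.Perm (Fin J))
    (hopt : ∀ j, ∀ τ : Equiv.Perm (Fin J), τ ≠ σ j →
      ∑ i, ‖W i - X j (σ j i)‖ ^ 2 < ∑ i, ‖W i - X j (τ i)‖ ^ 2)
    (hmean : ∀ i, W i = (1 / m : ℝ) • ∑ j, X j (σ j i)) :
    ∃ r > (0 : ℝ), ∀ Z : Fin J → E, (∀ i, ‖Z i - W i‖ < r) →
      (1 / m : ℝ) * ∑ j, sqD W (X j) ≤ (1 / m : ℝ) * ∑ j, sqD Z (X j) := by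
  classical
  set c : Fin m → Equiv.Perm (Fin J) → (Fin J → E) → ℝ :=
    fun j τ Z => ∑ i, ‖Z i - X j (τ i)‖ ^ 2 with hc
  -- the gap δ
  set S : Finset (Fin m × Equiv.Perm (Fin J)) :=
    Finset.univ.filter (fun p => p.2 ≠ σ p.1) with hS
  set δ : ℝ := if h : S.Nonempty then S.inf' h (fun p => c p.1 p.2 W - c p.1 (σ p.1) W) else 1
    with hδ
  have hδpos : 0 < δ := by
    rw [hδ]
    split_ifs with h
    · rw [Finset.lt_inf'_iff]
      rintro ⟨j, τ⟩ hp
      have hτ : τ ≠ σ j := by simpa [hS] using hp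
      have := hopt j τ hτ
      simp only [hc]
      linarith
    · norm_num
  have hδle : ∀ j τ, τ ≠ σ j → δ ≤ c j τ W - c j (σ j) W := by
    intro j τ hτ
    have hmem : (j, τ) ∈ S := by simp [hS, hτ]
    have hne : S.Nonempty := ⟨_, hmem⟩
    rw [hδ, dif_pos hne]
    exact Finset.inf'_le _ hmem
  set B : ℝ := ∑ j, ∑ i, ‖X j i‖ with hB
  have hB0 : 0 ≤ B := Finset.sum_nonneg fun j _ =>
    Finset.sum_nonneg fun i _ => norm_nonneg _
  have hBj : ∀ j : Fin m, ∑ i, ‖X j i‖ ≤ B :=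
    fun j => Finset.single_le_sum (f := fun j => ∑ i, ‖X j i‖)
      (fun j _ => Finset.sum_nonneg fun i _ => norm_nonneg _) (Finset.mem_univ j)
  have h4B : (0:ℝ) < 4 * B + 1 := by linarith
  refine ⟨δ / (4 * B + 1), div_pos hδpos h4B, ?_⟩
  set r : ℝ := δ / (4 * B + 1) with hrdef
  have hr : 0 < r := div_pos hδpos h4B
  have hr4 : 4 * r * B < δ := by
    have h1 : r * (4 * B + 1) = δ := div_mul_cancel₀ _ (ne_of_gt h4B)
    nlinarith
  intro Z hZ
  -- each σ j remains optimal for Z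
  have key2 : ∀ j, c j (σ j) Z ≤ sqD Z (X j) := by
    intro j
    apply le_ciInf
    intro τ
    by_cases hτ : τ = σ j
    · subst hτ; exact le_refl _
    · -- gap estimate
      have hinner : ∀ τ' : Equiv.Perm (Fin J),
          c j τ' Z = c j τ' W + ∑ i, ‖Z i - W i‖ ^ 2
            + 2 * ∑ i, ⟪Z i - W i, W i - X j (τ' i)⟫ :=
        fun τ' => cost_expand' Z W (fun i => X j (τ' i))
      have hdiff : c j τ Z - c j (σ j) Z
          = (c j τ W - c j (σ j) W)
            + 2 * ∑ i, ⟪Z i - W i, X j (σ j i) - X j (τ i)⟫ := by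
        rw [hinner τ, hinner (σ j)]
        have : ∀ i, ⟪Z i - W i, X j (σ j i) - X j (τ i)⟫
            = ⟪Z i - W i, W i - X j (τ i)⟫ - ⟪Z i - W i, W i - X j (σ j i)⟫ := by
          intro i
          rw [← inner_sub_right]
          congr 1
          abel
        rw [Finset.sum_congr rfl fun i _ => this i, Finset.sum_sub_distrib]
        ring
      have hbound : -(2 * r * (2 * B)) ≤ 2 * ∑ i, ⟪Z i - W i, X j (σ j i) - X j (τ i)⟫ := by
        have h1 : ∀ i, -(r * (‖X j (σ j i)‖ + ‖X j (τ i)‖))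
            ≤ ⟪Z i - W i, X j (σ j i) - X j (τ i)⟫ := by
          intro i
          have habs := abs_real_inner_le_norm (Z i - W i) (X j (σ j i) - X j (τ i))
          have hn1 : ‖Z i - W i‖ * ‖X j (σ j i) - X j (τ i)‖
              ≤ r * (‖X j (σ j i)‖ + ‖X j (τ i)‖) := by
            have h2 : ‖X j (σ j i) - X j (τ i)‖ ≤ ‖X j (σ j i)‖ + ‖X j (τ i)‖ :=
              norm_sub_le _ _
            have h3 : ‖Z i - W i‖ ≤ r := (hZ i).le
            have := mul_le_mul h3 h2 (norm_nonneg _) hr.le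
            linarith
          have := neg_abs_le (⟪Z i - W i, X j (σ j i) - X j (τ i)⟫ : ℝ)
          linarith
        have h2 : ∑ i, -(r * (‖X j (σ j i)‖ + ‖X j (τ i)‖))
            ≤ ∑ i, ⟪Z i - W i, X j (σ j i) - X j (τ i)⟫ :=
          Finset.sum_le_sum fun i _ => h1 i
        have h3 : ∑ i, (r * (‖X j (σ j i)‖ + ‖X j (τ i)‖)) ≤ r * (2 * B) := by
          rw [← Finset.mul_sum]
          have hσs : ∑ i, ‖X j (σ j i)‖ = ∑ i, ‖X j i‖ :=
            Equiv.sum_comp (σ j) (fun i => ‖X j i‖)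
          have hτs : ∑ i, ‖X j (τ i)‖ = ∑ i, ‖X j i‖ :=
            Equiv.sum_comp τ (fun i => ‖X j i‖)
          have : ∑ i, (‖X j (σ j i)‖ + ‖X j (τ i)‖) = 2 * ∑ i, ‖X j i‖ := by
            rw [Finset.sum_add_distrib, hσs, hτs]; ring
          rw [this]
          have := hBj j
          nlinarith [hr.le]
        rw [Finset.sum_neg_distrib] at h2
        linarith
      have hgap := hδle j τ hτ
      have : 0 ≤ c j τ Z - c j (σ j) Z := by
        rw [hdiff]; linarith
      linarith
  have key1 : ∀ j, sqD W (X j) ≤ c j (σ j) W := by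
    intro j
    exact ciInf_le (Finite.bddBelow_range _) (σ j)
  -- mean property: ∑_j (W i − X j (σ j i)) = 0
  have hzero : ∀ i : Fin J, ∑ j, (W i - X j (σ j i)) = 0 := by
    intro i
    rw [Finset.sum_sub_distrib, Finset.sum_const, Finset.card_univ, Fintype.card_fin]
    have hm0 : (m : ℝ) ≠ 0 := by positivity
    rw [sub_eq_zero, hmean i, ← Nat.cast_smul_eq_nsmul ℝ, smul_smul]
    have hmul : (m:ℝ) * (1/m) = 1 := by field_simp
    rw [hmul, one_smul]
  have key3 : ∑ j, c j (σ j) W ≤ ∑ j, c j (σ j) Z := by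
    have hid : ∀ j, c j (σ j) Z = c j (σ j) W + ∑ i, ‖Z i - W i‖ ^ 2
        + 2 * ∑ i, ⟪Z i - W i, W i - X j (σ j i)⟫ :=
      fun j => cost_expand' Z W (fun i => X j (σ j i))
    have hsum : ∑ j, c j (σ j) Z = ∑ j, c j (σ j) W
        + (m : ℝ) * ∑ i, ‖Z i - W i‖ ^ 2
        + 2 * ∑ j, ∑ i, ⟪Z i - W i, W i - X j (σ j i)⟫ := by
      rw [Finset.sum_congr rfl fun j _ => hid j, Finset.sum_add_distrib,
        Finset.sum_add_distrib, Finset.sum_const, Finset.card_univ, Fintype.card_fin,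
        nsmul_eq_mul, ← Finset.mul_sum]
    have hz : ∑ j, ∑ i, ⟪Z i - W i, W i - X j (σ j i)⟫ = 0 := by
      rw [Finset.sum_comm]
      apply Finset.sum_eq_zero
      intro i _
      rw [← inner_sum, hzero i, inner_zero_right]
    rw [hsum, hz]
    have : 0 ≤ (m : ℝ) * ∑ i, ‖Z i - W i‖ ^ 2 := by positivity
    linarith
  have hfin : ∑ j, sqD W (X j) ≤ ∑ j, sqD Z (X j) :=
    le_trans (Finset.sum_le_sum fun j _ => key1 j)
      (le_trans key3 (Finset.sum_le_sum fun j _ => key2 j))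
  have h1m : (0:ℝ) ≤ 1 / m := by positivity
  exact mul_le_mul_of_nonneg_left hfin h1m
end
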